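/- arXiv:2405.06432 — 3 statements merged into one kernel-verified Lean document; each statement's English description precedes it below -/
import Mathlib

section
/- Let c, β₁, β₂ ∈ ℝ, δ > 0, and suppose |c + σ₁ β₁ + σ₂ β₂| ≥ δ for all four sign choices σ₁, σ₂ ∈ {+1, −1}. Let M be the complex 4×4 matrix M = [[−i·c, −β₂, −β₁, 0], [β₂, −i·c, 0, −β₁], [β₁, 0, −i·c, −β₂], [0, β₁, β₂, −i·c]]. Then M is invertible and for every u ∈ ℂ⁴ one has ‖M u‖₂ ≥ δ ‖u‖₂ (equivalently, ‖M⁻¹ v‖₂ ≤ δ⁻¹ ‖v‖₂ for all v ∈ ℂ⁴), where ‖·‖₂ is the Euclidean norm on ℂ⁴. -/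
/-!
Writing `J₂ = [[0, -1], [1, 0]]`, the block is `M = -i c + β₂ (I₂ ⊗ J₂) + β₁ (J₂ ⊗ I₂)`. The
tensor products of the eigenvectors `(1, ∓i) / √2` of `J₂` form an orthonormal eigenbasis of `M`
with eigenvalues `-i (c + σ₁ β₁ + σ₂ β₂)`, so by Parseval `‖M u‖² = Σ (c + σ₁ β₁ + σ₂ β₂)² |⟪e_σ, u⟫|²
≥ δ² ‖u‖²`. A linear map bounded below by `δ > 0` is injective, hence `M` is invertible.
-/

open Matrix Complex

theorem OrthonormalBasis.mul_norm_le_norm_apply_of_apply_eq_smul {ι 𝕜 E : Type*} [RCLike 𝕜]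
    [NormedAddCommGroup E] [InnerProductSpace 𝕜 E] [Fintype ι] (b : OrthonormalBasis ι 𝕜 E)
    (T : E →ₗ[𝕜] E) (μ : ι → 𝕜) (hT : ∀ i, T (b i) = μ i • b i) {δ : ℝ}
    (hμ : ∀ i, δ ≤ ‖μ i‖) (u : E) : δ * ‖u‖ ≤ ‖T u‖ := by
  rcases le_or_gt δ 0 with hδ | hδ
  · exact (mul_nonpos_of_nonpos_of_nonneg hδ (norm_nonneg u)).trans (norm_nonneg _)
  have hcoeff : ∀ i, inner 𝕜 (b i) (T u) = μ i * inner 𝕜 (b i) u := by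
    intro i
    rw [← b.sum_repr' u, map_sum]
    simp only [map_smul, hT, smul_smul]
    rw [b.orthonormal.inner_right_fintype, b.orthonormal.inner_right_fintype]
    ring
  have hsq : (δ * ‖u‖) ^ 2 ≤ ‖T u‖ ^ 2 := by
    rw [mul_pow, ← b.sum_sq_norm_inner_right (T u), ← b.sum_sq_norm_inner_right u, Finset.mul_sum]
    refine Finset.sum_le_sum fun i _ => ?_
    rw [hcoeff, norm_mul, mul_pow]
    gcongr
    exact hμ i
  exact pow_le_pow_iff_left₀ (by positivity) (norm_nonneg _) two_ne_zero |>.1 hsq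

theorem Matrix.isUnit_of_mul_norm_le_norm_toEuclideanLin {n 𝕜 : Type*} [Fintype n]
    [DecidableEq n] [RCLike 𝕜] {M : Matrix n n 𝕜} {δ : ℝ} (hδ : 0 < δ)
    (h : ∀ u, δ * ‖u‖ ≤ ‖toEuclideanLin M u‖) : IsUnit M := by
  refine mulVec_injective_iff_isUnit.1 fun x y hxy => ?_
  have hzero : toEuclideanLin M (WithLp.toLp 2 (x - y)) = 0 := by
    simp [toLpLin_apply, mulVec_sub, hxy]
  have hbound := h (WithLp.toLp 2 (x - y))
  rw [hzero, norm_zero] at hbound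
  have : WithLp.toLp 2 (x - y) = 0 :=
    norm_eq_zero.1 ((nonpos_of_mul_nonpos_right hbound hδ).antisymm (norm_nonneg _))
  simpa [sub_eq_zero] using this

theorem Int.units_cast_sq {R : Type*} [Ring R] (σ : ℤˣ) : ((σ : ℤ) : R) ^ 2 = 1 := by
  rcases Int.units_eq_one_or σ with rfl | rfl <;> simp

theorem Int.units_one_add_mul_div_two (σ τ : ℤˣ) :
    ((1 + σ * τ) / 2 : ℂ) = if σ = τ then 1 else 0 := by
  rcases Int.units_eq_one_or σ with rfl | rfl <;> rcases Int.units_eq_one_or τ with rfl | rfl <;>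
    norm_num

def melnikovBlock (c β₁ β₂ : ℝ) : Matrix (Fin 4) (Fin 4) ℂ :=
  !![-(I * c), -β₂, -β₁, 0;
     β₂, -(I * c), 0, -β₁;
     β₁, 0, -(I * c), -β₂;
     0, β₁, β₂, -(I * c)]

/-- `(1, σ₁ i) ⊗ (1, σ₂ i) / 2`, a tensor product of unit eigenvectors of `J₂`. -/
noncomputable def melnikovEigenvector (σ : ℤˣ × ℤˣ) : EuclideanSpace ℂ (Fin 4) :=
  !₂[1 / 2, σ.2 * I / 2, σ.1 * I / 2, -(σ.1 * σ.2) / 2]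

theorem inner_melnikovEigenvector (σ τ : ℤˣ × ℤˣ) :
    inner ℂ (melnikovEigenvector σ) (melnikovEigenvector τ) =
      (1 + σ.1 * τ.1) / 2 * ((1 + σ.2 * τ.2) / 2) := by
  simp [melnikovEigenvector, PiLp.inner_apply, Fin.sum_univ_four, map_ofNat]
  linear_combination -(σ.1 * τ.1 + σ.2 * τ.2 : ℂ) / 4 * I_sq

theorem orthonormal_melnikovEigenvector : Orthonormal ℂ melnikovEigenvector := by
  rw [orthonormal_iff_ite]
  intro σ τ
  rw [inner_melnikovEigenvector, Int.units_one_add_mul_div_two, Int.units_one_add_mul_div_two,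
    ite_zero_mul_ite_zero, one_mul]
  exact if_congr Prod.ext_iff.symm rfl rfl

noncomputable def melnikovEigenbasis : OrthonormalBasis (ℤˣ × ℤˣ) ℂ (EuclideanSpace ℂ (Fin 4)) :=
  .mk orthonormal_melnikovEigenvector
    (orthonormal_melnikovEigenvector.linearIndependent.span_eq_top_of_card_eq_finrank
      (by simp)).ge

theorem melnikovBlock_apply_melnikovEigenbasis (c β₁ β₂ : ℝ) (σ : ℤˣ × ℤˣ) :
    toEuclideanLin (melnikovBlock c β₁ β₂) (melnikovEigenbasis σ) =
      (-(I * ((c + σ.1 * β₁ + σ.2 * β₂ : ℝ) : ℂ))) • melnikovEigenbasis σ := by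
  have h₁ : ((σ.1 : ℤ) : ℂ) ^ 2 = 1 := Int.units_cast_sq σ.1
  have h₂ : ((σ.2 : ℤ) : ℂ) ^ 2 = 1 := Int.units_cast_sq σ.2
  rw [melnikovEigenbasis, OrthonormalBasis.coe_mk]
  ext j
  fin_cases j <;> simp [melnikovBlock, melnikovEigenvector, toLpLin_apply] <;> ring_nf <;>
    simp only [I_sq, h₁, h₂] <;> ring

/-- Quantitative invertibility of the `4×4` Fourier block of the matrix
cohomological equation `L_ω u + Γ_{0,β} u − u Γ_{0,β} = v` under the
second Melnikov lower bound. -/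
theorem second_melnikov_block_quantitative (c β₁ β₂ δ : ℝ) (hδ : 0 < δ)
    (h : ∀ σ₁ σ₂ : ℝ, (σ₁ = 1 ∨ σ₁ = -1) → (σ₂ = 1 ∨ σ₂ = -1) →
      δ ≤ |c + σ₁ * β₁ + σ₂ * β₂|)
    (M : Matrix (Fin 4) (Fin 4) ℂ)
    (hM : M = !![-(Complex.I * (c : ℂ)), -(β₂ : ℂ), -(β₁ : ℂ), 0;
                 (β₂ : ℂ), -(Complex.I * (c : ℂ)), 0, -(β₁ : ℂ);
                 (β₁ : ℂ), 0, -(Complex.I * (c : ℂ)), -(β₂ : ℂ);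
                 0, (β₁ : ℂ), (β₂ : ℂ), -(Complex.I * (c : ℂ))]) :
    IsUnit M ∧ ∀ u : EuclideanSpace ℂ (Fin 4), δ * ‖u‖ ≤ ‖Matrix.toEuclideanLin M u‖ := by
  have hsign (σ : ℤˣ) : ((σ : ℤ) : ℝ) = 1 ∨ ((σ : ℤ) : ℝ) = -1 := by
    rcases Int.units_eq_one_or σ with rfl | rfl <;> simp
  have hbound : ∀ u, δ * ‖u‖ ≤ ‖toEuclideanLin (melnikovBlock c β₁ β₂) u‖ :=
    melnikovEigenbasis.mul_norm_le_norm_apply_of_apply_eq_smul _ _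
      (melnikovBlock_apply_melnikovEigenbasis c β₁ β₂) fun σ => by
        rw [norm_neg, norm_mul, norm_I, one_mul, norm_real, Real.norm_eq_abs]
        exact h _ _ (hsign σ.1) (hsign σ.2)
  subst hM
  exact ⟨isUnit_of_mul_norm_le_norm_toEuclideanLin hδ hbound, hbound⟩
end

section
/- Let n > d ≥ 1 and set m = n − d. Let Ω, G, J be real 2n×2n matrices with Ωᵀ = −Ω, Gᵀ = G, J² = −I_{2n}, and ΩJ = −G. Let L be a real 2n×d matrix and W a real 2n×2m matrix. Write Ω_{LL} = Lᵀ Ω L, Ω_{LW} = Lᵀ Ω W, Ω_{WW} = Wᵀ Ω W, G_{LL} = Lᵀ G L, G_{WL} = Wᵀ G L, and assume G_{LL} and Ω_{WW} are invertible. Define B = G_{LL}⁻¹, C = Ω_{WW}⁻¹ G_{WL} B, A = (1/2) Cᵀ Ω_{WW} C, and N = L A + J L B + W C. Then Nᵀ Ω N = Aᵀ Ω_{LL} A + B Ω_{LL} B + Aᵀ Ω_{LW} C − (Aᵀ Ω_{LW} C)ᵀ. -/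
open Matrix

/-- The `(2,2)` block computation in the proof that the frame `P = (L N W)` is
almost symplectic:
`Nᵀ Ω N = Aᵀ Ω_{LL} A + B Ω_{LL} B + Aᵀ Ω_{LW} C − (Aᵀ Ω_{LW} C)ᵀ`. -/
theorem frame_block_NN (n d : ℕ) (hd : 1 ≤ d) (hnd : d < n)
    (m : ℕ) (hm : m = n - d)
    (Ω G J : Matrix (Fin (2 * n)) (Fin (2 * n)) ℝ)
    (hΩ : Ωᵀ = -Ω) (hG : Gᵀ = G) (hJ : J * J = -1) (hΩJ : Ω * J = -G)
    (L : Matrix (Fin (2 * n)) (Fin d) ℝ)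
    (W : Matrix (Fin (2 * n)) (Fin (2 * m)) ℝ)
    (hGLL : IsUnit (Lᵀ * G * L)) (hΩWW : IsUnit (Wᵀ * Ω * W))
    (B : Matrix (Fin d) (Fin d) ℝ) (hB : B = (Lᵀ * G * L)⁻¹)
    (C : Matrix (Fin (2 * m)) (Fin d) ℝ) (hC : C = (Wᵀ * Ω * W)⁻¹ * (Wᵀ * G * L) * B)
    (A : Matrix (Fin d) (Fin d) ℝ) (hA : A = (1 / 2 : ℝ) • (Cᵀ * (Wᵀ * Ω * W) * C))
    (N : Matrix (Fin (2 * n)) (Fin d) ℝ) (hN : N = L * A + J * L * B + W * C) :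
    Nᵀ * Ω * N = Aᵀ * (Lᵀ * Ω * L) * A + B * (Lᵀ * Ω * L) * B +
      Aᵀ * (Lᵀ * Ω * W) * C - (Aᵀ * (Lᵀ * Ω * W) * C)ᵀ := by
  have hGLLd := (Matrix.isUnit_iff_isUnit_det _).mp hGLL
  have hΩWWd := (Matrix.isUnit_iff_isUnit_det _).mp hΩWW
  have hGB : (Lᵀ * G * L) * B = 1 := by rw [hB]; exact Matrix.mul_nonsing_inv _ hGLLd
  have hBG : B * (Lᵀ * G * L) = 1 := by rw [hB]; exact Matrix.nonsing_inv_mul _ hGLLd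
  have hBT : Bᵀ = B := by
    rw [hB, Matrix.transpose_nonsing_inv]
    congr 1
    simp [Matrix.transpose_mul, hG, Matrix.mul_assoc]
  have hAT : Aᵀ = -A := by
    rw [hA]
    simp only [Matrix.transpose_smul, Matrix.transpose_mul, Matrix.transpose_transpose, hΩ,
      Matrix.mul_neg, Matrix.neg_mul, smul_neg, Matrix.mul_assoc]
  have hJΩ : Jᵀ * Ω = G := by
    have h := congrArg Matrix.transpose hΩJ
    simp only [Matrix.transpose_mul, hΩ, Matrix.transpose_neg, hG, Matrix.mul_neg] at h
    exact neg_injective h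
  have hGJ : G * J = Ω := by
    have hG' : G = -(Ω * J) := by rw [hΩJ, neg_neg]
    rw [hG']
    calc -(Ω * J) * J = -(Ω * (J * J)) := by
          simp only [Matrix.neg_mul, Matrix.mul_assoc]
      _ = Ω := by rw [hJ]; simp
  have hJΩJ : Jᵀ * Ω * J = Ω := by rw [hJΩ, hGJ]
  have hΩC : (Wᵀ * Ω * W) * C = Wᵀ * G * L * B := by
    rw [hC, ← Matrix.mul_assoc, ← Matrix.mul_assoc, Matrix.mul_nonsing_inv _ hΩWWd,
      Matrix.one_mul]
  have h2A : Cᵀ * (Wᵀ * Ω * W) * C = A + A := by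
    rw [hA, ← add_smul]; norm_num
  -- the nine terms
  have h1 : (L * A)ᵀ * Ω * (L * A) = Aᵀ * (Lᵀ * Ω * L) * A := by
    simp only [Matrix.transpose_mul, Matrix.mul_assoc]
  have h2 : (L * A)ᵀ * Ω * (J * L * B) = A := by
    calc (L * A)ᵀ * Ω * (J * L * B) = Aᵀ * ((Lᵀ * (Ω * J) * L) * B) := by
          simp only [Matrix.transpose_mul, Matrix.mul_assoc]
      _ = -(Aᵀ * ((Lᵀ * G * L) * B)) := by
          rw [hΩJ]
          simp only [Matrix.mul_neg, Matrix.neg_mul, Matrix.mul_assoc]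
      _ = A := by rw [hGB, Matrix.mul_one, hAT, neg_neg]
  have h3 : (L * A)ᵀ * Ω * (W * C) = Aᵀ * (Lᵀ * Ω * W) * C := by
    simp only [Matrix.transpose_mul, Matrix.mul_assoc]
  have h4 : (J * L * B)ᵀ * Ω * (L * A) = A := by
    calc (J * L * B)ᵀ * Ω * (L * A) = Bᵀ * ((Lᵀ * (Jᵀ * Ω) * L) * A) := by
          simp only [Matrix.transpose_mul, Matrix.mul_assoc]
      _ = (B * (Lᵀ * G * L)) * A := by
          rw [hJΩ, hBT]; simp only [Matrix.mul_assoc]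
      _ = A := by rw [hBG, Matrix.one_mul]
  have h5 : (J * L * B)ᵀ * Ω * (J * L * B) = B * (Lᵀ * Ω * L) * B := by
    calc (J * L * B)ᵀ * Ω * (J * L * B) = Bᵀ * ((Lᵀ * (Jᵀ * Ω * J) * L) * B) := by
          simp only [Matrix.transpose_mul, Matrix.mul_assoc]
      _ = B * (Lᵀ * Ω * L) * B := by
          rw [hJΩJ, hBT]; simp only [Matrix.mul_assoc]
  have h9 : (W * C)ᵀ * Ω * (J * L * B) = -(A + A) := by
    calc (W * C)ᵀ * Ω * (J * L * B) = Cᵀ * ((Wᵀ * (Ω * J) * L) * B) := by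
          simp only [Matrix.transpose_mul, Matrix.mul_assoc]
      _ = -(Cᵀ * (Wᵀ * G * L * B)) := by
          rw [hΩJ]
          simp only [Matrix.mul_neg, Matrix.neg_mul, Matrix.mul_assoc]
      _ = -(Cᵀ * ((Wᵀ * Ω * W) * C)) := by rw [← hΩC]
      _ = -(A + A) := by rw [← Matrix.mul_assoc, h2A]
  have h6 : (J * L * B)ᵀ * Ω * (W * C) = -(A + A) := by
    have key : ((J * L * B)ᵀ * Ω * (W * C))ᵀ = A + A := by
      calc ((J * L * B)ᵀ * Ω * (W * C))ᵀ
          = Cᵀ * ((Wᵀ * (Ωᵀ * J) * L) * B) := by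
            simp only [Matrix.transpose_mul, Matrix.transpose_transpose, Matrix.mul_assoc]
        _ = Cᵀ * (Wᵀ * G * L * B) := by
            rw [hΩ, Matrix.neg_mul, hΩJ, neg_neg]
        _ = Cᵀ * ((Wᵀ * Ω * W) * C) := by rw [← hΩC]
        _ = A + A := by rw [← Matrix.mul_assoc, h2A]
    have h' := congrArg Matrix.transpose key
    rw [Matrix.transpose_transpose] at h'
    rw [h', Matrix.transpose_add, hAT, neg_add]
  have h7 : (W * C)ᵀ * Ω * (L * A) = -(Aᵀ * (Lᵀ * Ω * W) * C)ᵀ := by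
    simp only [Matrix.transpose_mul, Matrix.transpose_transpose, hΩ,
      Matrix.mul_neg, Matrix.neg_mul, neg_neg, Matrix.mul_assoc]
  have h8 : (W * C)ᵀ * Ω * (W * C) = A + A := by
    calc (W * C)ᵀ * Ω * (W * C) = Cᵀ * (Wᵀ * Ω * W) * C := by
          simp only [Matrix.transpose_mul, Matrix.mul_assoc]
      _ = A + A := h2A
  have expand : Nᵀ * Ω * N =
      (L * A)ᵀ * Ω * (L * A) + (L * A)ᵀ * Ω * (J * L * B) + (L * A)ᵀ * Ω * (W * C) +
      (J * L * B)ᵀ * Ω * (L * A) + (J * L * B)ᵀ * Ω * (J * L * B) +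
      (J * L * B)ᵀ * Ω * (W * C) +
      (W * C)ᵀ * Ω * (L * A) + (W * C)ᵀ * Ω * (J * L * B) + (W * C)ᵀ * Ω * (W * C) := by
    rw [hN]
    simp only [Matrix.transpose_add, Matrix.add_mul, Matrix.mul_add]
    abel
  rw [expand, h1, h2, h3, h4, h5, h6, h7, h8, h9]
  abel
end

section
/- Let d ≥ 1, m ≥ 1, τ > d, and let β ∈ ℝ^m satisfy β_i ≠ 0 for all i and |β_i| ≠ |β_j| for all i ≠ j. Then there exists γ > 0 such that the set of ω ∈ [1,2]^d satisfying, for every k ∈ ℤ^d \ {0}, every i ∈ {1,…,m}, and every pair i ≠ j: (0) |k·ω| ≥ γ ‖k‖₁^{−τ}; (1) |k·ω − β_i| ≥ γ ‖k‖₁^{−τ}; (2) |k·ω − β_i + β_j| ≥ γ ‖k‖₁^{−τ} and |k·ω − β_i − β_j| ≥ γ ‖k‖₁^{−τ}; has positive d-dimensional Lebesgue measure. -/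
/-!
Remove from the cube `[1,2]^d` the `γ ‖k‖₁^{-τ}`-neighbourhoods of the finitely many hyperplanes
`k·ω = c`, for each `k ≠ 0`, where `c` ranges over `0`, `βᵢ` and `βᵢ ± βⱼ`. Integrating along the
coordinate where `|kᵢ|` is largest (so `|kᵢ| ≥ ‖k‖₁ / d`), such a slab meets the cube in volume
at most `2dγ ‖k‖₁^{-(τ+1)}`, and `∑_{k ∈ ℤ^d} ‖k‖₁^{-(τ+1)}` converges because `τ + 1 > d`.
The removed set therefore has measure `O(γ)`, which is less than `1` for small `γ`.
-/

open MeasureTheory Set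
open scoped ENNReal

lemma volume_setOf_abs_mul_sub_lt {a : ℝ} (ha : a ≠ 0) (b ε : ℝ) :
    volume {x : ℝ | |a * x - b| < ε} = ENNReal.ofReal (2 * ε / |a|) := by
  have : {x : ℝ | |a * x - b| < ε} = (a * ·) ⁻¹' Metric.ball b ε := by
    ext x; simp [Real.dist_eq]
  rw [this, Real.volume_preimage_mul_left ha, Real.volume_ball, ← ENNReal.ofReal_mul (abs_nonneg _),
    abs_inv, inv_mul_eq_div]

lemma volume_le_mul_of_forall_volume_slice_le {n : ℕ} {α : Fin (n + 1) → Type*}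
    [∀ j, MeasureSpace (α j)] [∀ j, SigmaFinite (volume : Measure (α j))] (i : Fin (n + 1))
    {S : Set (∀ j, α j)} (hS : MeasurableSet S) {B : Set (∀ j, α (i.succAbove j))}
    (hB : MeasurableSet B) (hSB : ∀ ω ∈ S, i.removeNth ω ∈ B) {δ : ℝ≥0∞}
    (hδ : ∀ y ∈ B, volume {x | i.insertNth x y ∈ S} ≤ δ) :
    volume S ≤ δ * volume B := by
  have he := (volume_preserving_piFinSuccAbove α i).symm
  have hT : MeasurableSet ((MeasurableEquiv.piFinSuccAbove α i).symm ⁻¹' S) :=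
    (MeasurableEquiv.measurable _) hS
  have hslice : ∀ y, volume {x | i.insertNth x y ∈ S} ≤ B.indicator (fun _ => δ) y := by
    intro y
    by_cases hy : y ∈ B
    · simpa [hy] using hδ y hy
    · have : {x | i.insertNth x y ∈ S} = ∅ :=
        eq_empty_of_forall_notMem fun x hx => hy (by simpa using hSB _ hx)
      simp [this]
  calc volume S = volume ((MeasurableEquiv.piFinSuccAbove α i).symm ⁻¹' S) :=
        (he.measure_preimage hS.nullMeasurableSet).symm
    _ = ∫⁻ y, volume {x | i.insertNth x y ∈ S} := by
        rw [Measure.volume_eq_prod, Measure.prod_apply_symm hT]; rfl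
    _ ≤ ∫⁻ y, B.indicator (fun _ => δ) y := lintegral_mono hslice
    _ = δ * volume B := lintegral_indicator_const hB δ

lemma volume_cube {ι : Type*} [Fintype ι] : volume (univ.pi fun _ : ι => Icc (1 : ℝ) 2) = 1 := by
  rw [volume_pi_pi]
  norm_num [Real.volume_Icc]

lemma volume_cube_inter_slab_le {d : ℕ} (k : Fin d → ℝ) {i : Fin d} (hk : k i ≠ 0) (c ε : ℝ) :
    volume ((univ.pi fun _ => Icc (1 : ℝ) 2) ∩ {ω : Fin d → ℝ | |∑ j, k j * ω j - c| < ε})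
      ≤ ENNReal.ofReal (2 * ε / |k i|) := by
  obtain ⟨n, rfl⟩ : ∃ n, d = n + 1 := Nat.exists_eq_succ_of_ne_zero i.pos.ne'
  have hS : MeasurableSet ((univ.pi fun _ => Icc (1 : ℝ) 2) ∩
      {ω : Fin (n + 1) → ℝ | |∑ j, k j * ω j - c| < ε}) :=
    (MeasurableSet.univ_pi fun _ => measurableSet_Icc).inter
      (measurableSet_lt (by fun_prop) measurable_const)
  refine (volume_le_mul_of_forall_volume_slice_le i hS (.univ_pi fun _ => measurableSet_Icc)
    (fun ω hω j _ => hω.1 _ (mem_univ _)) fun y _ => ?_).trans_eq (by rw [volume_cube, mul_one])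
  refine (measure_mono fun x hx => ?_).trans
    (volume_setOf_abs_mul_sub_lt hk (c - ∑ j, k (i.succAbove j) * y j) ε).le
  have : |∑ j, k j * Fin.insertNth (α := fun _ => ℝ) i x y j - c| < ε := hx.2
  rw [Fin.sum_univ_succAbove _ i] at this
  simp only [Fin.insertNth_apply_same, Fin.insertNth_apply_succAbove] at this
  show |k i * x - (c - ∑ j, k (i.succAbove j) * y j)| < ε
  rwa [sub_sub_eq_add_sub]

lemma sum_abs_pos_of_ne_zero {ι : Type*} [Fintype ι] {k : ι → ℝ} (hk : k ≠ 0) :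
    0 < ∑ i, |k i| := by
  obtain ⟨j, hj⟩ := Function.ne_iff.1 hk
  exact Finset.sum_pos' (fun i _ => abs_nonneg (k i)) ⟨j, Finset.mem_univ j, abs_pos.2 hj⟩

lemma exists_sum_abs_le_card_mul_abs {ι : Type*} [Fintype ι] [Nonempty ι] (k : ι → ℝ) :
    ∃ i, ∑ j, |k j| ≤ Fintype.card ι * |k i| := by
  obtain ⟨i, hi⟩ := Finite.exists_max fun j => |k j|
  refine ⟨i, (Finset.sum_le_card_nsmul _ _ _ fun j _ => hi j).trans_eq ?_⟩
  rw [nsmul_eq_mul, Finset.card_univ]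

lemma volume_cube_inter_slab_le_of_ne_zero {d : ℕ} {k : Fin d → ℝ} (hk : k ≠ 0) (c : ℝ) {ε : ℝ}
    (hε : 0 ≤ ε) :
    volume ((univ.pi fun _ => Icc (1 : ℝ) 2) ∩ {ω : Fin d → ℝ | |∑ j, k j * ω j - c| < ε})
      ≤ ENNReal.ofReal (2 * d * ε / ∑ j, |k j|) := by
  obtain ⟨j, -⟩ := Function.ne_iff.1 hk
  have : Nonempty (Fin d) := ⟨j⟩
  obtain ⟨i, hi⟩ := exists_sum_abs_le_card_mul_abs k
  rw [Fintype.card_fin] at hi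
  have hN : 0 < ∑ j, |k j| := sum_abs_pos_of_ne_zero hk
  have hki : 0 < |k i| := pos_of_mul_pos_right (hN.trans_le hi) (Nat.cast_nonneg d)
  refine (volume_cube_inter_slab_le k (abs_pos.1 hki) c ε).trans (ENNReal.ofReal_le_ofReal ?_)
  rw [div_le_div_iff₀ hki hN]
  calc 2 * ε * ∑ j, |k j| ≤ 2 * ε * (d * |k i|) := by gcongr
    _ = 2 * d * ε * |k i| := by ring

lemma summable_sum_abs_rpow_neg {ι : Type*} [Fintype ι] {s : ℝ} (hs : Fintype.card ι < s) :
    Summable fun k : ι → ℤ => (∑ i, |(k i : ℝ)|) ^ (-s) := by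
  set L := Submodule.span ℤ (Set.range (Pi.basisFun ℝ ι))
  have hmem : ∀ k : ι → ℤ, (fun i => (k i : ℝ)) ∈ L := fun k => by
    rw [(Pi.basisFun ℝ ι).mem_span_iff_repr_mem ℤ]
    exact fun i => ⟨k i, by simp⟩
  have hL : Summable fun z : L => ‖z‖ ^ (-s) := by
    refine ZLattice.summable_norm_rpow L (-s) ?_
    rw [finrank_span_eq_card ((Pi.basisFun ℝ ι).linearIndependent.restrict_scalars' ℤ)]
    linarith
  have hinj : Function.Injective fun k : ι → ℤ => (⟨fun i => (k i : ℝ), hmem k⟩ : L) := by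
    intro k l h
    ext i
    simpa using congrFun (congrArg Subtype.val h) i
  refine (hL.comp_injective hinj).of_nonneg_of_le (fun k => by positivity) fun k => ?_
  have hs0 : -s ≠ 0 := by linarith [(Nat.cast_nonneg (Fintype.card ι) : (0:ℝ) ≤ _)]
  rcases eq_or_ne k 0 with rfl | hk
  · simp only [Pi.zero_apply, Int.cast_zero, abs_zero, Finset.sum_const_zero, Real.zero_rpow hs0]
    exact Real.rpow_nonneg (norm_nonneg _) _
  have hnorm : ‖(fun i => (k i : ℝ))‖ ≤ ∑ i, |(k i : ℝ)| :=
    pi_norm_le_iff_of_nonneg (by positivity) |>.2 fun i =>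
      Finset.single_le_sum (f := fun i => |(k i : ℝ)|) (fun i _ => abs_nonneg _) (Finset.mem_univ i)
  have hpos : 0 < ‖(fun i => (k i : ℝ))‖ := by
    refine norm_pos_iff.2 fun h => hk (funext fun i => ?_)
    simpa using congrFun h i
  exact Real.rpow_le_rpow_of_nonpos hpos hnorm (by linarith)

lemma volume_cube_inter_nearResonant_le {d : ℕ} (F : Finset ℝ) (τ : ℝ) {γ : ℝ} (hγ : 0 ≤ γ) :
    volume ((univ.pi fun _ => Icc (1 : ℝ) 2) ∩ {ω : Fin d → ℝ | ∃ k : Fin d → ℤ, k ≠ 0 ∧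
        ∃ c ∈ F, |∑ i, (k i : ℝ) * ω i - c| < γ * (∑ i, |(k i : ℝ)|) ^ (-τ)})
      ≤ ENNReal.ofReal γ * (2 * d * F.card *
          ∑' k : Fin d → ℤ, ENNReal.ofReal ((∑ i, |(k i : ℝ)|) ^ (-(τ + 1)))) := by
  have hset : (univ.pi fun _ => Icc (1 : ℝ) 2) ∩ {ω : Fin d → ℝ | ∃ k : Fin d → ℤ, k ≠ 0 ∧
        ∃ c ∈ F, |∑ i, (k i : ℝ) * ω i - c| < γ * (∑ i, |(k i : ℝ)|) ^ (-τ)} =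
      ⋃ (k : Fin d → ℤ) (_ : k ≠ 0) (c ∈ F), (univ.pi fun _ => Icc (1 : ℝ) 2) ∩
        {ω | |∑ i, (k i : ℝ) * ω i - c| < γ * (∑ i, |(k i : ℝ)|) ^ (-τ)} := by
    ext ω
    simp only [mem_inter_iff, mem_ofPred_eq, mem_iUnion, exists_prop]
    tauto
  rw [hset, ← ENNReal.tsum_mul_left, ← ENNReal.tsum_mul_left]
  refine (measure_iUnion_le _).trans (ENNReal.tsum_le_tsum fun k => ?_)
  rcases eq_or_ne k 0 with rfl | hk
  · simp
  set N := ∑ i, |(k i : ℝ)|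
  have hk' : (fun i => (k i : ℝ)) ≠ 0 := fun h => hk (funext fun i => by simpa using congrFun h i)
  have hN : 0 < N := sum_abs_pos_of_ne_zero hk'
  calc volume (⋃ (_ : k ≠ 0) (c ∈ F), (univ.pi fun _ => Icc (1 : ℝ) 2) ∩
        {ω | |∑ i, (k i : ℝ) * ω i - c| < γ * N ^ (-τ)})
      ≤ ∑ c ∈ F, volume ((univ.pi fun _ => Icc (1 : ℝ) 2) ∩
        {ω : Fin d → ℝ | |∑ i, (k i : ℝ) * ω i - c| < γ * N ^ (-τ)}) :=
        (measure_mono (iUnion_subset fun _ => subset_rfl)).trans (measure_biUnion_finset_le _ _)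
    _ ≤ ∑ c ∈ F, ENNReal.ofReal (2 * d * (γ * N ^ (-τ)) / N) := Finset.sum_le_sum fun c _ =>
        volume_cube_inter_slab_le_of_ne_zero hk' c (by positivity)
    _ = ENNReal.ofReal γ * (2 * d * F.card * ENNReal.ofReal (N ^ (-(τ + 1)))) := by
        rw [Finset.sum_const, nsmul_eq_mul, neg_add', Real.rpow_sub_one hN.ne',
          show 2 * d * (γ * N ^ (-τ)) / N = γ * (2 * d * (N ^ (-τ) / N)) by ring,
          ENNReal.ofReal_mul hγ, ENNReal.ofReal_mul (by positivity),
          ENNReal.ofReal_mul (by positivity), ENNReal.ofReal_ofNat, ENNReal.ofReal_natCast]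
        ring

theorem exists_pos_volume_cube_diophantine {d : ℕ} {τ : ℝ} (hτ : (d : ℝ) < τ + 1)
    (F : Finset ℝ) :
    ∃ γ : ℝ, 0 < γ ∧ 0 < volume {ω : Fin d → ℝ | (∀ i, ω i ∈ Icc (1 : ℝ) 2) ∧
      ∀ k : Fin d → ℤ, k ≠ 0 → ∀ c ∈ F,
        γ * (∑ i, |(k i : ℝ)|) ^ (-τ) ≤ |∑ i, (k i : ℝ) * ω i - c|} := by
  have hC : 2 * d * F.card *
      ∑' k : Fin d → ℤ, ENNReal.ofReal ((∑ i, |(k i : ℝ)|) ^ (-(τ + 1))) ≠ ⊤ := by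
    rw [← ENNReal.ofReal_tsum_of_nonneg (fun k => by positivity)
      (summable_sum_abs_rpow_neg (by simpa using hτ))]
    exact ENNReal.mul_ne_top (by finiteness) ENNReal.ofReal_ne_top
  obtain ⟨γ, hγ, hγC⟩ := ENNReal.exists_nnreal_pos_mul_lt hC one_ne_zero
  refine ⟨γ, hγ, ?_⟩
  have hbad := (volume_cube_inter_nearResonant_le (d := d) F τ γ.coe_nonneg).trans_lt
    (by rwa [ENNReal.ofReal_coe_nnreal])
  rw [← volume_cube (ι := Fin d)] at hbad
  refine (tsub_pos_of_lt hbad).trans_le (le_measure_sdiff.trans (measure_mono ?_))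
  rintro ω ⟨hcube, hgood⟩
  refine ⟨fun i => hcube i (mem_univ i), fun k hk c hc => not_lt.1 fun hlt => ?_⟩
  exact hgood ⟨hcube, k, hk, c, hc, hlt⟩

theorem diophantine_melnikov_positive_measure_general (d m : ℕ)
    (τ : ℝ) (hτ : (d : ℝ) < τ) (β : Fin m → ℝ) :
    ∃ γ : ℝ, 0 < γ ∧
      0 < MeasureTheory.volume {ω : Fin d → ℝ |
        (∀ i, ω i ∈ Set.Icc (1 : ℝ) 2) ∧
        ∀ k : Fin d → ℤ, k ≠ 0 →
          (γ * (∑ i, |(k i : ℝ)|) ^ (-τ) ≤ |∑ i, (k i : ℝ) * ω i|) ∧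
          (∀ i : Fin m,
            γ * (∑ i, |(k i : ℝ)|) ^ (-τ) ≤ |(∑ i, (k i : ℝ) * ω i) - β i|) ∧
          (∀ i j : Fin m, i ≠ j →
            γ * (∑ i, |(k i : ℝ)|) ^ (-τ) ≤ |(∑ i, (k i : ℝ) * ω i) - β i + β j| ∧
            γ * (∑ i, |(k i : ℝ)|) ^ (-τ) ≤ |(∑ i, (k i : ℝ) * ω i) - β i - β j|)} := by
  classical
  obtain ⟨γ, hγ, hvol⟩ := exists_pos_volume_cube_diophantine (d := d) (by linarith)
    (insert 0 (Finset.univ.image β ∪ Finset.univ.image (fun p : Fin m × Fin m => β p.1 - β p.2) ∪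
      Finset.univ.image fun p : Fin m × Fin m => β p.1 + β p.2))
  refine ⟨γ, hγ, hvol.trans_le (measure_mono ?_)⟩
  rintro ω ⟨hcube, hgood⟩
  refine ⟨hcube, fun k hk => ⟨?_, fun i => ?_, fun i j _ => ⟨?_, ?_⟩⟩⟩
  · simpa using hgood k hk 0 (by simp)
  · exact hgood k hk (β i) (by simp)
  · simpa only [sub_sub_eq_add_sub, add_sub_right_comm] using hgood k hk (β i - β j) (by simp)
  · simpa only [sub_add_eq_sub_sub] using hgood k hk (β i + β j) (by simp)

/-- Genericity of the Diophantine–Melnikov conditions: for fixed normal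
frequencies `β` with pairwise distinct nonzero moduli and `τ > d`, there is a
`γ > 0` for which the set of internal frequencies `ω ∈ [1,2]^d` satisfying the
Diophantine condition and the first and second Melnikov conditions of type
`(γ, τ)` has positive Lebesgue measure. -/
theorem diophantine_melnikov_positive_measure (d m : ℕ) (hd : 1 ≤ d) (hm : 1 ≤ m)
    (τ : ℝ) (hτ : (d : ℝ) < τ) (β : Fin m → ℝ)
    (hβ : ∀ i, β i ≠ 0) (hβ' : ∀ i j : Fin m, i ≠ j → |β i| ≠ |β j|) :
    ∃ γ : ℝ, 0 < γ ∧
      0 < MeasureTheory.volume {ω : Fin d → ℝ |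
        (∀ i, ω i ∈ Set.Icc (1 : ℝ) 2) ∧
        ∀ k : Fin d → ℤ, k ≠ 0 →
          (γ * (∑ i, |(k i : ℝ)|) ^ (-τ) ≤ |∑ i, (k i : ℝ) * ω i|) ∧
          (∀ i : Fin m,
            γ * (∑ i, |(k i : ℝ)|) ^ (-τ) ≤ |(∑ i, (k i : ℝ) * ω i) - β i|) ∧
          (∀ i j : Fin m, i ≠ j →
            γ * (∑ i, |(k i : ℝ)|) ^ (-τ) ≤ |(∑ i, (k i : ℝ) * ω i) - β i + β j| ∧
            γ * (∑ i, |(k i : ℝ)|) ^ (-τ) ≤ |(∑ i, (k i : ℝ) * ω i) - β i - β j|)} :=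
  diophantine_melnikov_positive_measure_general d m τ hτ β
end
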